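/- Let n, m₁, m₂ be natural numbers and let F : (Fin n → Bool) → Bool, G₁ : (Fin m₁ → Bool) → Bool, G₂ : (Fin m₂ → Bool) → Bool be Boolean functions. Let H' be the combiner of G₁ and G₂ (a Boolean function in the m₁ + m₂ + 2 variables (y₁, y₂, w, w') given by H'(y₁,y₂,w,w') = (G₁ y₁ ∧ w) ∨ (¬w ∧ (∀ i, y₁ i = true) ∧ G₂ y₂ ∧ w')), and let H be the combiner of F and H' (a Boolean function in the variables (x, y₁, y₂, w, w', z, z') given by H = (F x ∧ z) ∨ (¬z ∧ (∀ i, x i = true) ∧ H'(y₁,y₂,w,w') ∧ z')). Then ‖H‖ = ‖F‖ · 2^(m₁+m₂+3) + ‖G₁‖ · 2^(m₂+1) + ‖G₂‖. -/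

import Mathlib

/-!
A satisfying assignment of a combiner either has `z = true`, so `F x` holds and `y`, `z'` are
free, or has `z = false`, which forces `x` to be the distinguished all-true point, `z' = true`
and `G y`. Hence `‖combiner F G‖ = ‖F‖ · 2|β| + ‖G‖`; the nested count follows by applying this
to the inner combiner and then to the outer one, whose second formula is the inner combiner.
-/

open Finset

/-- `a₀` plays the role of the all-true assignment `∀ i, x i = true`. -/
def combiner {α β : Type*} [DecidableEq α] (a₀ : α) (F : α → Bool) (G : β → Bool)
    (x : α) (y : β) (z z' : Bool) : Bool :=
  (F x && z) || (!z && decide (x = a₀) && G y && z')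

theorem card_combiner {α β : Type*} [Fintype α] [DecidableEq α] [Fintype β] (a₀ : α)
    (F : α → Bool) (G : β → Bool) :
    Nat.card {p : α × β × Bool × Bool | combiner a₀ F G p.1 p.2.1 p.2.2.1 p.2.2.2 = true} =
      Nat.card {x | F x = true} * (Fintype.card β * 2) + Nat.card {y | G y = true} := by
  classical
  have hsplit :
      univ.filter (fun p : α × β × Bool × Bool => combiner a₀ F G p.1 p.2.1 p.2.2.1 p.2.2.2) =
        univ.filter (F · = true) ×ˢ univ ×ˢ {true} ×ˢ univ ∪
          {a₀} ×ˢ univ.filter (G · = true) ×ˢ {false} ×ˢ {true} := by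
    ext ⟨x, y, z, z'⟩
    cases z <;> cases z' <;> simp [combiner, and_comm, eq_comm (a := a₀)]
  simp only [Set.coe_ofPred, Nat.card_eq_fintype_card, Fintype.card_subtype]
  rw [hsplit, card_union_of_disjoint (by simp [disjoint_left])]
  simp [mul_comm]

/-- Nested (three-formula) application of the combining lemma:
`‖H‖ = ‖F‖ * 2^(m₁+m₂+3) + ‖G₁‖ * 2^(m₂+1) + ‖G₂‖`. -/
theorem combiner_nested_count (n m₁ m₂ : ℕ)
    (F : (Fin n → Bool) → Bool) (G₁ : (Fin m₁ → Bool) → Bool) (G₂ : (Fin m₂ → Bool) → Bool)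
    (H' : (Fin m₁ → Bool) → (Fin m₂ → Bool) → Bool → Bool → Bool)
    (hH' : ∀ (y₁ : Fin m₁ → Bool) (y₂ : Fin m₂ → Bool) (w w' : Bool),
      H' y₁ y₂ w w' = ((G₁ y₁ && w) || (!w && decide (∀ i, y₁ i = true) && G₂ y₂ && w')))
    (H : (Fin n → Bool) → (Fin m₁ → Bool) → (Fin m₂ → Bool) → Bool → Bool → Bool → Bool → Bool)
    (hH : ∀ (x : Fin n → Bool) (y₁ : Fin m₁ → Bool) (y₂ : Fin m₂ → Bool) (w w' z z' : Bool),
      H x y₁ y₂ w w' z z' =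
        ((F x && z) || (!z && decide (∀ i, x i = true) && H' y₁ y₂ w w' && z'))) :
    Nat.card {p : (Fin n → Bool) × (Fin m₁ → Bool) × (Fin m₂ → Bool) × Bool × Bool × Bool × Bool |
        H p.1 p.2.1 p.2.2.1 p.2.2.2.1 p.2.2.2.2.1 p.2.2.2.2.2.1 p.2.2.2.2.2.2 = true} =
      Nat.card {σ : Fin n → Bool | F σ = true} * 2 ^ (m₁ + m₂ + 3) +
        Nat.card {σ : Fin m₁ → Bool | G₁ σ = true} * 2 ^ (m₂ + 1) +
          Nat.card {σ : Fin m₂ → Bool | G₂ σ = true} := by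
  have hall : ∀ k (x : Fin k → Bool), decide (∀ i, x i = true) = decide (x = fun _ => true) :=
    fun k x => by simp [funext_iff]
  have hH'_eq : H' = combiner (fun _ => true) G₁ G₂ := by
    funext y₁ y₂ w w'
    rw [hH', combiner, hall]
  let G : (Fin m₁ → Bool) × (Fin m₂ → Bool) × Bool × Bool → Bool :=
    fun q => H' q.1 q.2.1 q.2.2.1 q.2.2.2
  let regroup : (Fin n → Bool) × (Fin m₁ → Bool) × (Fin m₂ → Bool) × Bool × Bool × Bool × Bool ≃
      (Fin n → Bool) × ((Fin m₁ → Bool) × (Fin m₂ → Bool) × Bool × Bool) × Bool × Bool :=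
    { toFun := fun ⟨x, y₁, y₂, w, w', z, z'⟩ => (x, (y₁, y₂, w, w'), z, z')
      invFun := fun ⟨x, (y₁, y₂, w, w'), z, z'⟩ => (x, y₁, y₂, w, w', z, z')
      left_inv := fun _ => rfl
      right_inv := fun _ => rfl }
  have inner := card_combiner (fun _ => true) G₁ G₂
  rw [← hH'_eq] at inner
  calc _ = Nat.card {p : (Fin n → Bool) × ((Fin m₁ → Bool) × (Fin m₂ → Bool) × Bool × Bool) ×
            Bool × Bool | combiner (fun _ => true) F G p.1 p.2.1 p.2.2.1 p.2.2.2 = true} :=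
        Nat.card_congr (regroup.subtypeEquiv fun p => by simp [regroup, G, hH, combiner, hall])
    _ = _ := by
      rw [card_combiner, inner]
      simp only [Fintype.card_prod, Fintype.card_fun, Fintype.card_bool, Fintype.card_fin]
      ring
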